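/- arXiv:2006.07865 — 9 statements merged into one kernel-verified Lean document; each statement's English description precedes it below -/
import Mathlib

section
/- Let A, m, μ be as in the context (obscure membership deformed algebra). Then the membership function is scalar-invariant: for every nonzero real scalar k and every a ∈ A such that there exists b ∈ A with m b a ≠ 0, one has μ (k • a) = μ a. -/
/-- In the obscure membership deformed algebra `A∗(μ)`, the membership function is
scalar-invariant: `μ (k • a) = μ a` for every nonzero scalar `k`, provided `a` is not a
two-sided annihilator (there is `b` with `m b a ≠ 0`). -/
theorem membership_scalar_invariant
    {A : Type*} [AddCommGroup A] [Module ℝ A]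
    (hnzd : ∀ (r : ℝ) (x : A), r • x = 0 → r = 0 ∨ x = 0)
    (m : A → A → A)
    (hsmul_left : ∀ (r : ℝ) (a b : A), m (r • a) b = r • m a b)
    (hsmul_right : ∀ (r : ℝ) (a b : A), m a (r • b) = r • m a b)
    (μ : A → ℝ) (hpos : ∀ a, 0 < μ a)
    (hcomm : ∀ a b, μ b • m a b = μ a • m b a)
    (k : ℝ) (hk : k ≠ 0) (a : A) (ha : ∃ b, m b a ≠ 0) :
    μ (k • a) = μ a := by
  obtain ⟨b, hb⟩ := ha
  have h1 := hcomm (k • a) b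
  rw [hsmul_left, hsmul_right, smul_comm (μ b) k, smul_comm (μ (k • a)) k,
    hcomm a b] at h1
  -- h1 : k • μ a • m b a = k • μ (k • a) • m b a
  have h2 : (k * (μ a - μ (k • a))) • m b a = 0 := by
    rw [mul_smul, sub_smul, smul_sub, h1, sub_self]
  rcases hnzd _ _ h2 with h | h
  · rcases mul_eq_zero.mp h with h | h
    · exact absurd h hk
    · linarith [sub_eq_zero.mp h]
  · exact absurd h hb
end

section
/- Let A, m, μ be as in the context (obscure membership deformed algebra), and assume in addition the membership deformed left distributivity: μ (b + c) • m a (b + c) = μ b • m a b + μ c • m a c for all a, b, c ∈ A. Then the multiplication is right-distributive: m (b + c) a = m b a + m c a for all a, b, c ∈ A. -/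
/-- In the obscure membership deformed algebra `A∗(μ)`, the membership deformed left
distributivity implies ordinary right distributivity of the deformed product. -/
theorem right_distributivity_of_deformed_left_distributivity
    {A : Type*} [AddCommGroup A] [Module ℝ A]
    (hnzd : ∀ (r : ℝ) (x : A), r • x = 0 → r = 0 ∨ x = 0)
    (m : A → A → A)
    (hsmul_left : ∀ (r : ℝ) (a b : A), m (r • a) b = r • m a b)
    (hsmul_right : ∀ (r : ℝ) (a b : A), m a (r • b) = r • m a b)
    (μ : A → ℝ) (hpos : ∀ a, 0 < μ a)
    (hcomm : ∀ a b, μ b • m a b = μ a • m b a)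
    (hleft : ∀ a b c, μ (b + c) • m a (b + c) = μ b • m a b + μ c • m a c) :
    ∀ a b c : A, m (b + c) a = m b a + m c a := by
  intro a b c
  have key : μ a • m (b + c) a = μ a • (m b a + m c a) := by
    rw [← hcomm, hleft, hcomm a b, hcomm a c, smul_add]
  have := sub_eq_zero_of_eq key
  rw [← smul_sub] at this
  rcases hnzd _ _ this with h | h
  · exact absurd h (ne_of_gt (hpos a))
  · exact sub_eq_zero.mp h
end

section
/- Let A, m, μ be as in the context (obscure membership deformed algebra), and assume m is associative: m (m x y) z = m x (m y z) for all x, y, z ∈ A. Then for all a, b, c ∈ A with m (m b c) a ≠ 0, one has μ a * μ (m b c) = μ b * μ c (the cocycle-type constraint on μ forced by associativity). -/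
/-- In the obscure membership deformed algebra `A∗(μ)`, associativity of the deformed
product forces the cocycle-type constraint `μ a * μ (b ∗ c) = μ b * μ c`. -/
theorem associativity_forces_first_membership_constraint
    {A : Type*} [AddCommGroup A] [Module ℝ A]
    (hnzd : ∀ (r : ℝ) (x : A), r • x = 0 → r = 0 ∨ x = 0)
    (m : A → A → A)
    (hsmul_left : ∀ (r : ℝ) (a b : A), m (r • a) b = r • m a b)
    (hsmul_right : ∀ (r : ℝ) (a b : A), m a (r • b) = r • m a b)
    (μ : A → ℝ) (hpos : ∀ a, 0 < μ a)
    (hcomm : ∀ a b, μ b • m a b = μ a • m b a)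
    (hassoc : ∀ x y z, m (m x y) z = m x (m y z)) :
    ∀ a b c : A, m (m b c) a ≠ 0 → μ a * μ (m b c) = μ b * μ c := by
  intro a b c hX
  set X : A := m (m b c) a with hXdef
  -- commutation on a and (m b c)
  have h1 : μ (m b c) • m a (m b c) = μ a • X := hcomm a (m b c)
  -- key computation
  have h2 : (μ b * μ c) • m a (m b c) = (μ a * μ a) • X := by
    calc (μ b * μ c) • m a (m b c)
        = μ c • (μ b • m (m a b) c) := by rw [← hassoc, mul_comm, mul_smul]
      _ = μ c • m (μ b • m a b) c := by rw [hsmul_left]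
      _ = μ c • m (μ a • m b a) c := by rw [hcomm a b]
      _ = μ a • (μ c • m b (m a c)) := by
            rw [hsmul_left, hassoc, smul_comm]
      _ = μ a • m b (μ c • m a c) := by rw [hsmul_right]
      _ = μ a • m b (μ a • m c a) := by rw [hcomm a c]
      _ = (μ a * μ a) • X := by
            rw [hsmul_right, smul_comm, ← mul_smul, ← hassoc]
  have h3 : (μ a * μ b * μ c) • X = (μ a * (μ a * μ (m b c))) • X := by
    calc (μ a * μ b * μ c) • X
        = (μ b * μ c) • (μ a • X) := by
          rw [← mul_smul]; ring_nf
      _ = (μ b * μ c) • (μ (m b c) • m a (m b c)) := by rw [h1]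
      _ = μ (m b c) • ((μ b * μ c) • m a (m b c)) := by rw [smul_comm]
      _ = μ (m b c) • ((μ a * μ a) • X) := by rw [h2]
      _ = (μ a * (μ a * μ (m b c))) • X := by rw [← mul_smul]; ring_nf
  have h4 : (μ a * μ b * μ c - μ a * (μ a * μ (m b c))) • X = 0 := by
    rw [sub_smul, h3, sub_self]
  rcases hnzd _ _ h4 with h | h
  · have ha := (hpos a).ne'
    have : μ a * (μ b * μ c - μ a * μ (m b c)) = 0 := by ring_nf; linarith [h]
    rcases mul_eq_zero.1 this with h' | h'
    · exact absurd h' ha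
    · nlinarith [hpos a, hpos b, hpos c, hpos (m b c)]
  · exact absurd h hX
end

section
/- Let A, m, μ be as in the context (obscure membership deformed algebra), and assume m is associative: m (m x y) z = m x (m y z) for all x, y, z ∈ A. Then for all a, b, c ∈ A with m c (m b a) ≠ 0, one has μ b * μ b = μ (m a b) * μ (m b c) (the second constraint on μ forced by associativity, obtained by double commutation of triple products). -/
/-- In the obscure membership deformed algebra `A∗(μ)`, associativity of the deformed
product forces (via double commutation of triple products) the second constraint
`μ b * μ b = μ (a ∗ b) * μ (b ∗ c)`. -/
theorem associativity_forces_second_membership_constraint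
    {A : Type*} [AddCommGroup A] [Module ℝ A]
    (hnzd : ∀ (r : ℝ) (x : A), r • x = 0 → r = 0 ∨ x = 0)
    (m : A → A → A)
    (hsmul_left : ∀ (r : ℝ) (a b : A), m (r • a) b = r • m a b)
    (hsmul_right : ∀ (r : ℝ) (a b : A), m a (r • b) = r • m a b)
    (μ : A → ℝ) (hpos : ∀ a, 0 < μ a)
    (hcomm : ∀ a b, μ b • m a b = μ a • m b a)
    (hassoc : ∀ x y z, m (m x y) z = m x (m y z)) :
    ∀ a b c : A, m c (m b a) ≠ 0 → μ b * μ b = μ (m a b) * μ (m b c) := by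
  intro a b c hne
  have key : ∀ (r s : ℝ) (x : A), x ≠ 0 → r • x = s • x → r = s := by
    intro r s x hx h
    have h0 : (r - s) • x = 0 := by rw [sub_smul, h, sub_self]
    rcases hnzd _ _ h0 with h' | h'
    · exact sub_eq_zero.mp h'
    · exact absurd h' hx
  -- inner commutation inside m c (·)
  have h1 : μ b • m c (m a b) = μ a • m c (m b a) := by
    rw [← hsmul_right, hcomm a b, hsmul_right]
  -- outer commutation + associativity
  have h2 : μ c • m a (m b c) = μ (m a b) • m c (m a b) := by
    have := hcomm (m a b) c
    rwa [hassoc] at this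
  have h3 : μ a • m c (m b a) = μ (m c b) • m a (m c b) := by
    have := hcomm (m c b) a
    rwa [hassoc] at this
  have h4 : μ b • m a (m c b) = μ c • m a (m b c) := by
    rw [← hsmul_right, ← hcomm b c, hsmul_right]
  have h5 : μ b • m (m c b) a = μ c • m (m b c) a := by
    rw [← hsmul_left, ← hcomm b c, hsmul_left]
  -- nonvanishing of the reassociated products
  have hUne : m c (m a b) ≠ 0 := by
    intro h0
    have hz : μ a • m c (m b a) = 0 := by rw [← h1, h0, smul_zero]
    rcases hnzd _ _ hz with h' | h'
    · exact (hpos a).ne' h'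
    · exact hne h'
  have hTne : m a (m b c) ≠ 0 := by
    intro h0
    have hz : μ (m a b) • m c (m a b) = 0 := by rw [← h2, h0, smul_zero]
    rcases hnzd _ _ hz with h' | h'
    · exact (hpos (m a b)).ne' h'
    · exact hUne h'
  -- main chain: μ b ^ 2 = μ (m c b) * μ (m a b)
  have e1 : (μ b * μ b) • m c (m a b) = (μ (m c b) * μ (m a b)) • m c (m a b) := by
    calc (μ b * μ b) • m c (m a b)
        = μ b • (μ b • m c (m a b)) := by rw [smul_smul]
      _ = μ b • (μ a • m c (m b a)) := by rw [h1]
      _ = μ b • (μ (m c b) • m a (m c b)) := by rw [h3]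
      _ = μ (m c b) • (μ b • m a (m c b)) := smul_comm _ _ _
      _ = μ (m c b) • (μ c • m a (m b c)) := by rw [h4]
      _ = μ (m c b) • (μ (m a b) • m c (m a b)) := by rw [h2]
      _ = (μ (m c b) * μ (m a b)) • m c (m a b) := by rw [smul_smul]
  have hbb : μ b * μ b = μ (m c b) * μ (m a b) := key _ _ _ hUne e1
  -- μ (m c b) = μ (m b c)
  have e2 : (μ (m c b) * μ c) • m a (m b c) = (μ (m b c) * μ c) • m a (m b c) := by
    calc (μ (m c b) * μ c) • m a (m b c)
        = μ (m c b) • (μ c • m a (m b c)) := by rw [smul_smul]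
      _ = μ (m c b) • (μ b • m a (m c b)) := by rw [h4]
      _ = μ b • (μ (m c b) • m a (m c b)) := smul_comm _ _ _
      _ = μ b • (μ a • m (m c b) a) := by rw [hcomm a (m c b)]
      _ = μ a • (μ b • m (m c b) a) := smul_comm _ _ _
      _ = μ a • (μ c • m (m b c) a) := by rw [h5]
      _ = μ c • (μ a • m (m b c) a) := smul_comm _ _ _
      _ = μ c • (μ (m b c) • m a (m b c)) := by rw [← hcomm a (m b c)]
      _ = (μ (m b c) * μ c) • m a (m b c) := by rw [smul_smul, mul_comm]
  have htq : μ (m c b) = μ (m b c) :=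
    mul_right_cancel₀ (hpos c).ne' (key _ _ _ hTne e2)
  rw [hbb, htq, mul_comm]
end

section
/- Let A, m, μ be as in the context (obscure membership deformed algebra). If there exist elements a₁, a₂, b, c ∈ A with m (m b c) a₁ ≠ 0, m (m b c) a₂ ≠ 0, and μ a₁ ≠ μ a₂, then the multiplication m cannot be associative: ¬ (∀ x y z, m (m x y) z = m x (m y z)). (This is the paper's assertion that the obscure membership deformed algebra is necessarily nonassociative.) -/
/-- The obscure membership deformed algebra `A∗(μ)` is necessarily nonassociative:
if two triple products `(b ∗ c) ∗ a₁` and `(b ∗ c) ∗ a₂` are nonzero while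
`μ a₁ ≠ μ a₂`, the deformed product cannot be associative. -/
theorem obscure_membership_deformed_algebra_nonassociative
    {A : Type*} [AddCommGroup A] [Module ℝ A]
    (hnzd : ∀ (r : ℝ) (x : A), r • x = 0 → r = 0 ∨ x = 0)
    (m : A → A → A)
    (hsmul_left : ∀ (r : ℝ) (a b : A), m (r • a) b = r • m a b)
    (hsmul_right : ∀ (r : ℝ) (a b : A), m a (r • b) = r • m a b)
    (μ : A → ℝ) (hpos : ∀ a, 0 < μ a)
    (hcomm : ∀ a b, μ b • m a b = μ a • m b a)
    (a₁ a₂ b c : A)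
    (h₁ : m (m b c) a₁ ≠ 0) (h₂ : m (m b c) a₂ ≠ 0)
    (hμ : μ a₁ ≠ μ a₂) :
    ¬ (∀ x y z : A, m (m x y) z = m x (m y z)) := by
  intro hassoc
  have key : ∀ a : A, m (m b c) a ≠ 0 → μ c * μ b = μ a * μ (m b c) := by
    intro a hX
    have e1 : μ a • m (m b c) a = μ (m b c) • m a (m b c) := hcomm (m b c) a
    have s1 : μ b • m (m a b) c = μ a • m b (m a c) := by
      rw [← hsmul_left, hcomm a b, hsmul_left, hassoc]
    have s2 : μ c • m b (m a c) = μ a • m (m b c) a := by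
      rw [← hsmul_right, hcomm a c, hsmul_right, ← hassoc]
    have e2 : (μ c * μ b) • m a (m b c) = (μ a * μ a) • m (m b c) a := by
      rw [mul_smul, ← hassoc a b c, s1, smul_comm, s2, mul_smul, smul_comm]
    have haD : m a (m b c) ≠ 0 := by
      intro h0
      rw [h0, smul_zero] at e1
      rcases hnzd _ _ e1 with h | h
      · exact (hpos a).ne' h
      · exact hX h
    have e3 : (μ c * μ b) • m a (m b c) = (μ a * μ (m b c)) • m a (m b c) := by
      rw [e2, mul_smul, e1, mul_smul]
    have : (μ c * μ b - μ a * μ (m b c)) • m a (m b c) = 0 := by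
      rw [sub_smul, e3, sub_self]
    rcases hnzd _ _ this with h | h
    · linarith [sub_eq_zero.mp h]
    · exact absurd h haD
  have k1 := key a₁ h₁
  have k2 := key a₂ h₂
  have : μ a₁ * μ (m b c) = μ a₂ * μ (m b c) := by rw [← k1, ← k2]
  exact hμ (mul_right_cancel₀ (hpos (m b c)).ne' this)
end

section
/- Let A be a complex vector space with no zero scalar divisors, m : A → A → A a multiplication compatible with complex scalar multiplication in each argument and associative (m (m x y) z = m x (m y z) for all x, y, z), and Ω : A → A → ℂ a commutation factor satisfying m a b = Ω a b • m b a for all a, b ∈ A. Then Ω satisfies the deformed cocycle-like conditions: (i) for all a, b with m a b ≠ 0, Ω a b * Ω b a = 1; (ii) for all a, b, c with m (m b c) a ≠ 0, Ω a (m b c) = Ω a b * Ω a c; (iii) for all a, b, c with m c (m a b) ≠ 0, Ω (m a b) c = Ω a c * Ω b c. -/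
/-- For an associative double commutative algebra with commutation factor `Ω`
(`m a b = Ω a b • m b a`), the factor `Ω` satisfies the deformed cocycle-like
conditions (normalization and multiplicativity over products), wherever the
relevant products are nonzero. -/
theorem double_commutation_factor_cocycle_conditions
    {A : Type*} [AddCommGroup A] [Module ℂ A]
    (hnzd : ∀ (k : ℂ) (x : A), k • x = 0 → k = 0 ∨ x = 0)
    (m : A → A → A)
    (hsmul_left : ∀ (k : ℂ) (a b : A), m (k • a) b = k • m a b)
    (hsmul_right : ∀ (k : ℂ) (a b : A), m a (k • b) = k • m a b)
    (hassoc : ∀ x y z : A, m (m x y) z = m x (m y z))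
    (Ω : A → A → ℂ)
    (hΩ : ∀ a b : A, m a b = Ω a b • m b a) :
    (∀ a b : A, m a b ≠ 0 → Ω a b * Ω b a = 1) ∧
    (∀ a b c : A, m (m b c) a ≠ 0 → Ω a (m b c) = Ω a b * Ω a c) ∧
    (∀ a b c : A, m c (m a b) ≠ 0 → Ω (m a b) c = Ω a c * Ω b c) := by
  -- products with zero are zero
  have hm0l : ∀ b : A, m 0 b = 0 := by
    intro b
    have h := hsmul_left 0 0 b
    simpa using h
  have hm0r : ∀ a : A, m a 0 = 0 := by
    intro a
    have h := hsmul_right 0 a 0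
    simpa using h
  -- if k • x = x and x ≠ 0 then k = 1
  have key : ∀ (k : ℂ) (x : A), x ≠ 0 → x = k • x → k = 1 := by
    intro k x hx h
    have h0 : (k - 1) • x = 0 := by
      rw [sub_smul, one_smul, ← h, sub_self]
    rcases hnzd _ _ h0 with hk | hx'
    · exact sub_eq_zero.mp hk
    · exact absurd hx' hx
  have nzsmul : ∀ (k : ℂ) (x : A), k • x ≠ 0 → x ≠ 0 := by
    intro k x h e
    exact h (by rw [e, smul_zero])
  have part1 : ∀ a b : A, m a b ≠ 0 → Ω a b * Ω b a = 1 := by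
    intro a b h
    have hx : m a b = (Ω a b * Ω b a) • m a b := by
      conv_lhs => rw [hΩ a b, hΩ b a]
      rw [smul_smul]
    exact key _ _ h hx
  refine ⟨part1, ?_, ?_⟩
  · intro a b c h
    have h2 : m (m b c) a = Ω c a • m b (m a c) := by
      rw [hassoc b c a, hΩ c a, hsmul_right]
    have h3 : m b (m a c) = Ω b a • m (m a b) c := by
      rw [← hassoc b a c, hΩ b a, hsmul_left]
    have hbac : m b (m a c) ≠ 0 := by
      intro e
      exact h (by rw [h2, e, smul_zero])
    have hac : m a c ≠ 0 := fun e => hbac (by rw [e, hm0r])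
    have habc : m (m a b) c ≠ 0 := by
      intro e
      exact hbac (by rw [h3, e, smul_zero])
    have hab : m a b ≠ 0 := fun e => habc (by rw [e, hm0l])
    have hfull : m (m b c) a = (Ω c a * Ω b a * Ω a (m b c)) • m (m b c) a := by
      calc m (m b c) a = Ω c a • m b (m a c) := h2
        _ = Ω c a • (Ω b a • m (m a b) c) := by rw [h3]
        _ = Ω c a • (Ω b a • m a (m b c)) := by rw [hassoc a b c]
        _ = Ω c a • (Ω b a • (Ω a (m b c) • m (m b c) a)) := by rw [← hΩ a (m b c)]
        _ = (Ω c a * Ω b a * Ω a (m b c)) • m (m b c) a := by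
            rw [smul_smul, smul_smul]
    have heq := key _ _ h hfull
    have e1 := part1 a b hab
    have e2 := part1 a c hac
    linear_combination (Ω a b * Ω a c) * heq - Ω a (m b c) * e1 -
      (Ω a (m b c) * Ω a b * Ω b a) * e2
  · intro a b c h
    have h2 : m c (m a b) = Ω c a • m (m a c) b := by
      rw [← hassoc c a b, hΩ c a, hsmul_left]
    have h3 : m (m a c) b = Ω c b • m (m a b) c := by
      rw [hassoc a c b, hΩ c b, hsmul_right, ← hassoc a b c]
    have hacb : m (m a c) b ≠ 0 := by
      intro e
      exact h (by rw [h2, e, smul_zero])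
    have hac : m a c ≠ 0 := fun e => hacb (by rw [e, hm0l])
    have habc : m (m a b) c ≠ 0 := by
      intro e
      exact hacb (by rw [h3, e, smul_zero])
    have hcb : m c b ≠ 0 := by
      intro e
      exact hacb (by rw [hassoc a c b, e, hm0r])
    have hfull : m c (m a b) = (Ω c a * Ω c b * Ω (m a b) c) • m c (m a b) := by
      calc m c (m a b) = Ω c a • m (m a c) b := h2
        _ = Ω c a • (Ω c b • m (m a b) c) := by rw [h3]
        _ = Ω c a • (Ω c b • (Ω (m a b) c • m c (m a b))) := by
            rw [← hΩ (m a b) c]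
        _ = (Ω c a * Ω c b * Ω (m a b) c) • m c (m a b) := by
            rw [smul_smul, smul_smul]
    have heq := key _ _ h hfull
    have e1 := part1 a c hac
    have e2 := part1 c b hcb
    linear_combination (Ω a c * Ω b c) * heq - Ω (m a b) c * e1 -
      (Ω (m a b) c * Ω a c * Ω c a) * e2
end

section
/- Let A be an associative ℂ-algebra (not necessarily unital or commutative), with bilinear multiplication written a * b, and let ω : A → A → ℂ satisfy: (i) ω x y * ω y x = 1 for all x, y; (ii) ω x (L y z) = ω x y * ω x z for all x, y, z, where L y z = y * z − ω y z • (z * y) is the double εε-Lie bracket. Then L satisfies the deformed εε-Jacobi identity: for all a, b, c ∈ A, ω c a • L a (L b c) + ω a b • L b (L c a) + ω b c • L c (L a b) = 0, where each term L x (L y z) in the cyclic sum carries the factor ω z x pairing the outer element with the cyclically preceding one. -/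
/-- The double εε-Lie bracket `L a b = a * b − ω a b • (b * a)` on an associative
(not necessarily unital) ℂ-algebra satisfies the membership deformed εε-Jacobi identity,
given normalization `ω x y * ω y x = 1` and multiplicativity of `ω` over the bracket. -/
theorem double_epsilon_lie_bracket_jacobi
    {A : Type*} [NonUnitalRing A] [Module ℂ A]
    [SMulCommClass ℂ A A] [IsScalarTower ℂ A A]
    (ω : A → A → ℂ) (L : A → A → A)
    (hL : ∀ a b : A, L a b = a * b - ω a b • (b * a))
    (hnorm : ∀ x y : A, ω x y * ω y x = 1)
    (hmul : ∀ x y z : A, ω x (L y z) = ω x y * ω x z) :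
    ∀ a b c : A,
      ω c a • L a (L b c) + ω a b • L b (L c a) + ω b c • L c (L a b) = 0 := by
  intro a b c
  have e1 := hmul a b c
  have e2 := hmul b c a
  have e3 := hmul c a b
  have hab : ω a b ≠ 0 := left_ne_zero_of_mul_eq_one (hnorm a b)
  have hbc : ω b c ≠ 0 := left_ne_zero_of_mul_eq_one (hnorm b c)
  have hca : ω c a ≠ 0 := left_ne_zero_of_mul_eq_one (hnorm c a)
  have hba : ω b a = (ω a b)⁻¹ := eq_inv_of_mul_eq_one_right (hnorm a b)
  have hcb : ω c b = (ω b c)⁻¹ := eq_inv_of_mul_eq_one_right (hnorm b c)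
  have hac : ω a c = (ω c a)⁻¹ := eq_inv_of_mul_eq_one_right (hnorm c a)
  rw [hL a (L b c), hL b (L c a), hL c (L a b), e1, e2, e3,
      hL b c, hL c a, hL a b, hba, hcb, hac]
  simp only [mul_sub, sub_mul, smul_sub, smul_add, mul_smul_comm, smul_mul_assoc,
    smul_smul, mul_assoc]
  match_scalars <;> field_simp <;> ring
end

section
/- Fix n ≥ 2. Let H be a type with an n-ary operation m : (Fin n → H) → H that is n-ary associative: for every x : Fin (2n−1) → H and every position i with 0 ≤ i ≤ n−1, the value of m on the n-tuple obtained from x by replacing the window (x i, …, x (i+n−1)) with the single entry m applied to that window is independent of i. Let V be a complex vector space, f : H → Module.End ℂ V with f y ≠ 0 for all y, and π : (Fin n → H) → ℂ an n-ary Schur-like factor such that the composition f (x 0) * f (x 1) * ⋯ * f (x (n−1)) equals π x • f (m x) for every x : Fin n → H. Then π satisfies the n-ary 2-cocycle conditions: for every x : Fin (2n−1) → H, the product π (w_i x) * π (c_i x) is independent of i ∈ {0,…,n−1}, where w_i x : Fin n → H is the window (x i, …, x (i+n−1)) and c_i x : Fin n → H is the tuple (x 0, …, x (i−1), m (w_i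 x), x (i+n), …, x (2n−2)). -/
/-- The window `(x i, …, x (i+n−1))` of a `(2n−1)`-tuple `x`, starting at position `i`. -/
def naryWindow {H : Type*} (n : ℕ) (x : Fin (2 * n - 1) → H) (i : Fin n) :
    Fin n → H :=
  fun j => x ⟨i.val + j.val, by have := i.2; have := j.2; omega⟩

/-- The `n`-tuple obtained from a `(2n−1)`-tuple `x` by replacing the window starting at
position `i` with the single entry `m` applied to that window:
`(x 0, …, x (i−1), m (x i, …, x (i+n−1)), x (i+n), …, x (2n−2))`. -/
def naryContract {H : Type*} (n : ℕ) (m : (Fin n → H) → H)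
    (x : Fin (2 * n - 1) → H) (i : Fin n) : Fin n → H :=
  fun j =>
    if j.val < i.val then x ⟨j.val, by have := j.2; omega⟩
    else if j.val = i.val then m (naryWindow n x i)
    else x ⟨j.val + n - 1, by have := j.2; omega⟩

/-! Both sides of the cocycle identity come from reading the product
`f (x 0) * ⋯ * f (x (2n−2))` in two steps: first contract the window `wᵢ x` by the
representation property, which produces `π (wᵢ x) • f (m (wᵢ x))` between an untouched prefix
and suffix, then contract the resulting `n` factors, which produces `π (cᵢ x) • f (m (cᵢ x))`.
By associativity `m (cᵢ x)` does not depend on `i`, and a nonzero endomorphism determines the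
scalar in front of it. -/

theorem List.prod_ofFn_eq_mul_mul {M : Type*} [Monoid M] (a b c : ℕ) {k : ℕ}
    (h : a + b + c = k) (g : Fin k → M) :
    (List.ofFn g).prod =
      (List.ofFn fun j : Fin a => g ⟨j, by omega⟩).prod *
      (List.ofFn fun j : Fin b => g ⟨a + j, by omega⟩).prod *
      (List.ofFn fun j : Fin c => g ⟨a + b + j, by omega⟩).prod := by
  subst h
  rw [List.ofFn_add, List.prod_append, List.ofFn_add, List.prod_append]
  rfl

section NaryProduct

variable {H M : Type*} [Monoid M] {n : ℕ}

theorem exists_prod_ofFn_eq_and_prod_ofFn_naryContract_eq (m : (Fin n → H) → H)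
    (g : H → M) (x : Fin (2 * n - 1) → H) (i : Fin n) :
    ∃ P S : M,
      (List.ofFn fun j => g (x j)).prod =
        P * (List.ofFn fun j => g (naryWindow n x i j)).prod * S ∧
      (List.ofFn fun j => g (naryContract n m x i j)).prod =
        P * g (m (naryWindow n x i)) * S := by
  have hi := i.2
  refine ⟨(List.ofFn fun j : Fin i => g (x ⟨j, by omega⟩)).prod,
    (List.ofFn fun j : Fin (n - 1 - i) => g (x ⟨i + n + j, by omega⟩)).prod,
    List.prod_ofFn_eq_mul_mul i n (n - 1 - i) (by omega) _, ?_⟩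
  rw [List.prod_ofFn_eq_mul_mul i 1 (n - 1 - i) (by omega)]
  congr 4
  · funext j
    simp [naryContract]
  · simp [naryContract]
  · funext j
    simp only [naryContract]
    rw [if_neg (by omega), if_neg (by omega)]
    congr 2
    ext
    simp only
    omega

theorem prod_ofFn_eq_smul_of_projective {K A : Type*} [CommSemiring K] [Semiring A]
    [Algebra K A] (m : (Fin n → H) → H) (f : H → A) (π : (Fin n → H) → K)
    (hrep : ∀ x : Fin n → H, (List.ofFn fun i => f (x i)).prod = π x • f (m x))
    (x : Fin (2 * n - 1) → H) (i : Fin n) :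
    (List.ofFn fun j => f (x j)).prod =
      (π (naryWindow n x i) * π (naryContract n m x i)) • f (m (naryContract n m x i)) := by
  obtain ⟨P, S, hx, hc⟩ := exists_prod_ofFn_eq_and_prod_ofFn_naryContract_eq m f x i
  rw [hx, hrep, mul_smul_comm, smul_mul_assoc, ← hc, hrep, smul_smul]

end NaryProduct

theorem nary_projective_representation_factor_cocycle_general
    {H : Type*} {V : Type*} [AddCommGroup V] [Module ℂ V]
    (n : ℕ)
    (m : (Fin n → H) → H)
    (hassoc : ∀ (x : Fin (2 * n - 1) → H) (i i' : Fin n),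
      m (naryContract n m x i) = m (naryContract n m x i'))
    (f : H → Module.End ℂ V) (hf : ∀ y : H, f y ≠ 0)
    (π : (Fin n → H) → ℂ)
    (hrep : ∀ x : Fin n → H, (List.ofFn (fun i => f (x i))).prod = π x • f (m x)) :
    ∀ (x : Fin (2 * n - 1) → H) (i i' : Fin n),
      π (naryWindow n x i) * π (naryContract n m x i)
        = π (naryWindow n x i') * π (naryContract n m x i') := by
  intro x i i'
  apply smul_left_injective ℂ (hf (m (naryContract n m x i)))
  dsimp only
  rw [← prod_ofFn_eq_smul_of_projective m f π hrep x i, hassoc x i i',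
    ← prod_ofFn_eq_smul_of_projective m f π hrep x i']

/-- The `n`-ary Schur-like factor of an `n`-ary projective representation (with
nowhere-vanishing values of `f`) of an `n`-ary associative operation satisfies the
`n`-ary 2-cocycle conditions: `π (wᵢ x) * π (cᵢ x)` is independent of the position `i`. -/
theorem nary_projective_representation_factor_cocycle
    {H : Type*} {V : Type*} [AddCommGroup V] [Module ℂ V]
    (n : ℕ) (hn : 2 ≤ n)
    (m : (Fin n → H) → H)
    (hassoc : ∀ (x : Fin (2 * n - 1) → H) (i i' : Fin n),
      m (naryContract n m x i) = m (naryContract n m x i'))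
    (f : H → Module.End ℂ V) (hf : ∀ y : H, f y ≠ 0)
    (π : (Fin n → H) → ℂ)
    (hrep : ∀ x : Fin n → H, (List.ofFn (fun i => f (x i))).prod = π x • f (m x)) :
    ∀ (x : Fin (2 * n - 1) → H) (i i' : Fin n),
      π (naryWindow n x i) * π (naryContract n m x i)
        = π (naryWindow n x i') * π (naryContract n m x i') :=
  nary_projective_representation_factor_cocycle_general n m hassoc f hf π hrep
end

section
/- Let A be a real vector space with no zero scalar divisors, T : A → A → A → A a ternary multiplication, and μ : A → ℝ with μ a > 0 for all a, satisfying the obscure membership deformed ternary noncommutativity relations: for every permutation σ of {1,2,3} and all a₁, a₂, a₃ ∈ A, μ a₃ • T a₁ a₂ a₃ = μ a_{σ(3)} • T a_{σ(1)} a_{σ(2)} a_{σ(3)}. Then the algebra is 1-partially commutative: T a₁ a₂ a₃ = T a₂ a₁ a₃ for all a₁, a₂, a₃ ∈ A (i.e. the membership commutation factor for the transposition of the first two arguments equals 1). -/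
/-- An obscure membership deformed ternary algebra is 1-partially commutative:
the membership commutation relations force `T a₁ a₂ a₃ = T a₂ a₁ a₃`
(the membership commutation factor for the transposition of the first two
arguments equals 1). -/
theorem obscure_ternary_algebra_one_partially_commutative
    {A : Type*} [AddCommGroup A] [Module ℝ A]
    (hnzd : ∀ (r : ℝ) (x : A), r • x = 0 → r = 0 ∨ x = 0)
    (T : A → A → A → A)
    (μ : A → ℝ) (hpos : ∀ a, 0 < μ a)
    (hrel : ∀ (σ : Equiv.Perm (Fin 3)) (a : Fin 3 → A),
      μ (a 2) • T (a 0) (a 1) (a 2)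
        = μ (a (σ 2)) • T (a (σ 0)) (a (σ 1)) (a (σ 2))) :
    ∀ a₁ a₂ a₃ : A, T a₁ a₂ a₃ = T a₂ a₁ a₃ := by
  intro a₁ a₂ a₃
  have h := hrel (Equiv.swap 0 1) ![a₁, a₂, a₃]
  simp [Equiv.swap_apply_of_ne_of_ne] at h
  have h2 : μ a₃ • (T a₁ a₂ a₃ - T a₂ a₁ a₃) = 0 := by
    rw [smul_sub, h, sub_self]
  rcases hnzd _ _ h2 with h3 | h3
  · exact absurd h3 (ne_of_gt (hpos a₃))
  · exact sub_eq_zero.mp h3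
end
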